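/- arXiv:1201.2567 — 3 statements merged into one kernel-verified Lean document; each statement's English description precedes it below -/
import Mathlib

section
/- Let K be a number field, f ∈ K(x) of degree d > 1, and P ∈ P¹(K) a point that is infinitely f-divisible over K (for every n ≥ 1 there exists P_n ∈ P¹(K) with fⁿ(P_n) = P). Then P is a periodic point of f, i.e. f^N(P) = P for some N ≥ 1. -/
/-- Let `K` be a number field and `f` a self-map of `ℙ¹(K)` induced by a rational
function of degree `d > 1`, with associated canonical height `h` satisfying `h (f P) = d * h P`,
the Northcott property (sets of bounded canonical height are finite), and such that points of
canonical height zero are preperiodic (finite forward orbit).  If `P ∈ ℙ¹(K)` is infinitely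
`f`-divisible over `K` (for every `n ≥ 1` there exists `Pₙ ∈ ℙ¹(K)` with `fⁿ(Pₙ) = P`), then
`P` is a periodic point of `f`: `f^[N] P = P` for some `N ≥ 1`. -/
theorem periodic_of_infinitely_divisible
    {K : Type*} [Field K] [NumberField K]
    (f : Projectivization K (Fin 2 → K) → Projectivization K (Fin 2 → K))
    (d : ℕ) (hd : 1 < d)
    (h : Projectivization K (Fin 2 → K) → ℝ)
    (h_nonneg : ∀ P, 0 ≤ h P)
    (h_canonical : ∀ P, h (f P) = d * h P)
    (h_northcott : ∀ B : ℝ, {P : Projectivization K (Fin 2 → K) | h P ≤ B}.Finite)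
    (h_preperiodic : ∀ Q, h Q = 0 → (Set.range fun n : ℕ => f^[n] Q).Finite)
    (P : Projectivization K (Fin 2 → K))
    (h_div : ∀ n : ℕ, 1 ≤ n → ∃ Pn, f^[n] Pn = P) :
    ∃ N : ℕ, 1 ≤ N ∧ f^[N] P = P := by
  have hd1 : (1:ℝ) < (d:ℝ) := by exact_mod_cast hd
  have hdpos : ∀ n : ℕ, (0:ℝ) < (d:ℝ)^n := fun n => pow_pos (by linarith) n
  -- iterated canonical height
  have hiter : ∀ (n : ℕ) Q, h (f^[n] Q) = (d:ℝ)^n * h Q := by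
    intro n
    induction n with
    | zero => intro Q; simp
    | succ k ih =>
      intro Q
      rw [Function.iterate_succ_apply', h_canonical, ih]
      ring
  choose g hg using fun n : ℕ => h_div (n+1) (Nat.le_add_left 1 n)
  have hgh : ∀ n, (d:ℝ)^(n+1) * h (g n) = h P := by
    intro n; rw [← hiter (n+1) (g n), hg n]
  -- h P = 0
  have hP0 : h P = 0 := by
    by_contra hne
    have hpos : 0 < h P := lt_of_le_of_ne (h_nonneg P) (Ne.symm hne)
    have hinj : Function.Injective g := by
      intro a b hab
      have heq : (d:ℝ)^(a+1) = (d:ℝ)^(b+1) := by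
        have h1 := hgh a
        have h2 := hgh b
        rw [hab] at h1
        have hgb : 0 < h (g b) := by
          rcases lt_or_eq_of_le (h_nonneg (g b)) with hlt | he
          · exact hlt
          · exfalso; rw [← he] at h2; simp at h2; linarith
        have : (d:ℝ)^(a+1) * h (g b) = (d:ℝ)^(b+1) * h (g b) := by rw [h1, h2]
        exact mul_right_cancel₀ (ne_of_gt hgb) this
      have : a + 1 = b + 1 := by
        have hcast : d^(a+1) = d^(b+1) := by exact_mod_cast heq
        exact Nat.pow_right_injective hd hcast
      omega
    have hmem : ∀ n, g n ∈ {Q : Projectivization K (Fin 2 → K) | h Q ≤ h P} := by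
      intro n
      have := hgh n
      have h1 : (1:ℝ) ≤ (d:ℝ)^(n+1) := one_le_pow₀ (le_of_lt hd1)
      have hgn := h_nonneg (g n)
      simp only [Set.mem_setOf_eq]
      nlinarith
    exact Set.infinite_of_injective_forall_mem hinj hmem (h_northcott (h P))
  -- every g n has height zero, hence lies in the finite set {h ≤ 0}
  have hg0 : ∀ n, h (g n) = 0 := by
    intro n
    have := hgh n
    rw [hP0] at this
    have := hdpos (n+1)
    nlinarith
  have hfin := h_northcott 0
  have hnotinj : ¬ Function.Injective g := by
    intro hinj
    exact Set.infinite_of_injective_forall_mem hinj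
      (fun n => by simp only [Set.mem_setOf_eq]; rw [hg0 n]) hfin
  rw [Function.not_injective_iff] at hnotinj
  obtain ⟨a, b, hab, hne⟩ := hnotinj
  -- wlog a < b; produce period b - a
  have key : ∀ a b : ℕ, a < b → g a = g b → ∃ N, 1 ≤ N ∧ f^[N] P = P := by
    intro a b hlt heq
    refine ⟨b - a, by omega, ?_⟩
    have : f^[b - a] P = f^[(b - a) + (a + 1)] (g a) := by
      rw [Function.iterate_add_apply, hg a]
    rw [this, heq]
    have hba : (b - a) + (a + 1) = b + 1 := by omega
    rw [hba, hg b]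
  rcases lt_or_gt_of_ne hne with hlt | hgt
  · exact key a b hlt hab
  · exact key b a hgt hab.symm
end

section
/- Let α be an element of a number field K such that for every n ≥ 1 there exists β ∈ K with βⁿ = α. Then α = 0 or α = 1. -/
/-!
The logarithmic Weil height satisfies `h(βⁿ) = n h(β)`, so every root `β` of `α` has
`h(β) ≤ h(α)`; by Northcott's theorem the roots of `α` form a finite set. In a group, an element
with roots of every order and only finitely many roots is `1`: by pigeonhole two of its roots
coincide, which makes the element torsion, hence all its roots torsion; a root whose order is the
product of the orders of all roots then raises to `1`.
-/

open NumberField Height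

section RootsOfElement

variable {G : Type*} [LeftCancelMonoid G] {x : G}

theorem isOfFinOrder_of_forall_exists_pow_eq_of_finite (hroots : ∀ n ≠ 0, ∃ y : G, y ^ n = x)
    (hfin : {y : G | ∃ n ≠ 0, y ^ n = x}.Finite) : IsOfFinOrder x := by
  choose β hβ using fun n : ℕ ↦ hroots (n + 1) n.succ_ne_zero
  obtain ⟨a, -, b, -, hab, hβab⟩ := Set.infinite_univ.exists_ne_map_eq_of_mapsTo (f := β)
    (fun n _ ↦ (⟨n + 1, n.succ_ne_zero, hβ n⟩ : ∃ m ≠ 0, β n ^ m = x)) hfin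
  have hpow : β a ^ (a + 1) = β a ^ (b + 1) := by rw [hβ, hβab, hβ]
  have hβa : IsOfFinOrder (β a) := by
    rw [← orderOf_pos_iff, Nat.pos_iff_ne_zero]
    intro h0
    rw [pow_eq_pow_iff_modEq, h0, Nat.modEq_zero_iff] at hpow
    omega
  exact hβ a ▸ hβa.pow

theorem eq_one_of_forall_exists_pow_eq_of_finite (hroots : ∀ n ≠ 0, ∃ y : G, y ^ n = x)
    (hfin : {y : G | ∃ n ≠ 0, y ^ n = x}.Finite) : x = 1 := by
  have hx := isOfFinOrder_of_forall_exists_pow_eq_of_finite hroots hfin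
  set M := ∏ y ∈ hfin.toFinset, orderOf y
  have hM : M ≠ 0 := Finset.prod_ne_zero_iff.mpr fun y hy ↦ by
    obtain ⟨n, hn, rfl⟩ := hfin.mem_toFinset.mp hy
    exact (orderOf_pos_iff.mpr (hx.of_pow hn)).ne'
  obtain ⟨y, hy⟩ := hroots M hM
  rw [← hy]
  exact orderOf_dvd_iff_pow_eq_one.mp
    (Finset.dvd_prod_of_mem _ (hfin.mem_toFinset.mpr ⟨M, hM, hy⟩))

end RootsOfElement

theorem NumberField.finite_setOf_pow_eq {K : Type*} [Field K] [NumberField K] (α : K) :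
    {β : K | ∃ n ≠ 0, β ^ n = α}.Finite := by
  refine (finite_setOfPred_logHeight₁_le K (logHeight₁ α)).subset ?_
  rintro β ⟨n, hn, rfl⟩
  rw [Set.mem_ofPred_eq, logHeight₁_pow]
  exact le_mul_of_one_le_left (zero_le_logHeight₁ β) (mod_cast Nat.one_le_iff_ne_zero.mpr hn)

/-- Let `α` be an element of a number field `K` such that for every `n ≥ 1`
there exists `β ∈ K` with `βⁿ = α`.  Then `α = 0` or `α = 1`. -/
theorem eq_zero_or_one_of_all_roots
    {K : Type*} [Field K] [NumberField K] (α : K)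
    (h : ∀ n : ℕ, 1 ≤ n → ∃ β : K, β ^ n = α) :
    α = 0 ∨ α = 1 := by
  rcases eq_or_ne α 0 with hα | hα
  · exact Or.inl hα
  right
  have hroots : ∀ n ≠ 0, ∃ u : Kˣ, u ^ n = Units.mk0 α hα := fun n hn ↦ by
    obtain ⟨β, hβ⟩ := h n (Nat.one_le_iff_ne_zero.mpr hn)
    have hβ0 : β ≠ 0 := by rintro rfl; exact hα (hβ ▸ zero_pow hn)
    exact ⟨Units.mk0 β hβ0, Units.ext (by simpa using hβ)⟩
  have hfin : {u : Kˣ | ∃ n ≠ 0, u ^ n = Units.mk0 α hα}.Finite :=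
    ((finite_setOf_pow_eq α).preimage Units.val_injective.injOn).subset
      fun u ⟨n, hn, hu⟩ ↦ ⟨n, hn, by simpa using congrArg Units.val hu⟩
  simpa using congrArg Units.val (eq_one_of_forall_exists_pow_eq_of_finite hroots hfin)
end

section
/- Let 𝒞 = (C_n, φ_n) be a tower of curves over a number field K with a proper model over the ring of integers 𝒪, and suppose Ω := 𝒞(K)_n (the K-trivial points at level n) is finite. Assume that for all primes ℘ of 𝒪 outside a finite set there exists m = m_℘ ≥ n such that every k_℘-point of the reduction C_m mod ℘ is the reduction of a point in φ_{m,n}^{-1}(Ω). Then for every finite extension L/K, the set of L-trivial points 𝒞(L)_n equals Ω. -/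
/-- Let `𝒞 = (Cₙ, φₙ)` be a tower of curves over a number field `K` with a
proper model over the ring of integers, and suppose `Ω := 𝒞(K)ₙ` (the `K`-trivial points at level
`n`) is finite.  Assume that for infinitely many primes (all primes outside a finite set admit
infinitely many primes of `L` above them with equal residue field) there exists `m ≥ n` such that
every residue point of `C_m` is the reduction of a point of `φ_{m,n}⁻¹(Ω)`.  Then for every
finite extension `L/K` the set of `L`-trivial points `𝒞(L)ₙ` equals `Ω`.

The tower is presented through its sets of points: `C m` is `C_m(L)` for a fixed finite extension
`L/K`, `CK m ⊆ C m` is the subset of `K`-rational points, `φ m k : C_m(L) → C_k(L)` are the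
transition maps, `Prime` is the set of primes `℘_L` of `𝒪_L` whose residue field equals that of
the prime `℘` of `𝒪_K` below (an infinite set `S` of which satisfies the covering condition),
`Ck p m` is the set `C_m(k_℘)` of residue points of the proper model, and `red` the reduction
maps, compatible with the transition maps.  Distinct points of the proper model reduce to the
same residue point at only finitely many primes. -/
theorem trivial_points_eq_of_reduction_cover
    {K L : Type*} [Field K] [NumberField K] [Field L] [Algebra K L]
    [FiniteDimensional K L]
    (n : ℕ)
    (C : ℕ → Type*)                            -- the points `C_m(L)`
    (CK : ∀ m, Set (C m))                      -- the `K`-rational points `C_m(K) ⊆ C_m(L)`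
    (φ : ∀ m k : ℕ, k ≤ m → C m → C k)         -- the maps `φ_{m,k}`
    (hφK : ∀ m k (h : k ≤ m), ∀ x ∈ CK m, φ m k h x ∈ CK k)
    (Ω : Set (C n))
    (hΩ : Ω = {x ∈ CK n | ∀ m (h : n ≤ m), ∃ y ∈ CK m, φ m n h y = x})
    (hΩfin : Ω.Finite)
    (Prime : Type*)                            -- primes `℘_L` with residue field `k_℘`
    (Ck : Prime → ℕ → Type*)                   -- the residue points `C_m(k_℘)`
    (red : ∀ (p : Prime) (m : ℕ), C m → Ck p m)
    (φk : ∀ (p : Prime) (m k : ℕ), k ≤ m → Ck p m → Ck p k)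
    (hcompat : ∀ (p : Prime) (m k : ℕ) (h : k ≤ m) (x : C m),
      φk p m k h (red p m x) = red p k (φ m k h x))
    (S : Set Prime) (hS : S.Infinite)
    (hcover : ∀ p ∈ S, ∃ m, ∃ h : n ≤ m, ∀ y : Ck p m,
      ∃ x ∈ CK m, φ m n h x ∈ Ω ∧ red p m x = y)
    (hred_inj : ∀ x y : C n, x ≠ y → {p : Prime | red p n x = red p n y}.Finite) :
    {x : C n | ∀ m (h : n ≤ m), ∃ y : C m, φ m n h y = x} = Ω := by
  ext x
  simp only [Set.mem_setOf_eq]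
  constructor
  · intro hx
    by_contra hxΩ
    have key : ∀ p ∈ S, ∃ ω ∈ Ω, red p n ω = red p n x := by
      intro p hp
      obtain ⟨m, h, hm⟩ := hcover p hp
      obtain ⟨y, hy⟩ := hx m h
      obtain ⟨x', hx'K, hx'Ω, hx'red⟩ := hm (red p m y)
      refine ⟨φ m n h x', hx'Ω, ?_⟩
      rw [← hcompat, hx'red, hcompat, hy]
    have hsub : S ⊆ ⋃ ω ∈ Ω, {p : Prime | red p n ω = red p n x} := by
      intro p hp
      obtain ⟨ω, hω, hr⟩ := key p hp
      exact Set.mem_biUnion hω hr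
    have hfin : (⋃ ω ∈ Ω, {p : Prime | red p n ω = red p n x}).Finite :=
      Set.Finite.biUnion hΩfin (fun ω hω => hred_inj ω x (fun he => hxΩ (he ▸ hω)))
    exact hS (hfin.subset hsub)
  · intro hx m h
    rw [hΩ] at hx
    obtain ⟨y, _, hyx⟩ := hx.2 m h
    exact ⟨y, hyx⟩
end
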